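/- arXiv:1809.10090 — 2 statements merged into one kernel-verified Lean document; each statement's English description precedes it below -/
import Mathlib

section
/- In a root system with simple system Δ and Weyl-invariant inner product (·,·), any set of quasi-fundamental weights {χ_α}_{α∈Δ} (i.e. (χ_α, β) = d_α·δ_{αβ} with d_α > 0 for all α, β ∈ Δ) has the property that each χ_α, written as a linear combination of the simple roots in Δ, has all coefficients strictly positive. -/
/-!
Let `x = ∑ c j • b j` lie in the dual cone of an obtuse basis. Splitting `c` into its positive
and negative parts `x = w + v`, we get `‖v‖² = ⟪x, v⟫ - ⟪w, v⟫ ≤ 0`, so `v = 0`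
and, by linear independence, `c ≥ 0`.
For `k` outside the support of `c`, `⟪x, b k⟫ = ∑ c j ⟪b j, b k⟫` is a sum of non-positive
terms that is non-negative, so the support is orthogonal to its complement; by irreducibility
it is everything.
-/

open RealInnerProductSpace Finset

section ObtuseFamily

variable {V : Type*} [NormedAddCommGroup V] [InnerProductSpace ℝ V]
  {ι : Type*} [Fintype ι] {b : ι → V}

lemma inner_sum_smul_sum_smul_nonneg (hobtuse : Pairwise fun i j ↦ ⟪b i, b j⟫ ≤ 0)
    {p q : ι → ℝ} (hp : ∀ j, 0 ≤ p j) (hq : ∀ j, q j ≤ 0) (hpq : ∀ j, p j * q j = 0) :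
    0 ≤ ⟪∑ j, p j • b j, ∑ k, q k • b k⟫ := by
  rw [sum_inner]
  refine sum_nonneg fun j _ ↦ ?_
  rw [inner_sum]
  refine sum_nonneg fun k _ ↦ ?_
  rw [real_inner_smul_left, real_inner_smul_right]
  obtain rfl | hjk := eq_or_ne j k
  · rw [← mul_assoc, hpq, zero_mul]
  · exact mul_nonneg (hp j) (mul_nonneg_of_nonpos_of_nonpos (hq k) (hobtuse hjk))

lemma coeff_nonneg_of_forall_inner_nonneg (hli : LinearIndependent ℝ b)
    (hobtuse : Pairwise fun i j ↦ ⟪b i, b j⟫ ≤ 0) {c : ι → ℝ}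
    (hdual : ∀ k, 0 ≤ ⟪∑ j, c j • b j, b k⟫) (j : ι) : 0 ≤ c j := by
  set x := ∑ j, c j • b j
  set v := ∑ k, min (c k) 0 • b k
  set w := ∑ k, max (c k) 0 • b k
  have hxwv : x = w + v := by
    simp only [x, v, w, ← sum_add_distrib, ← add_smul, max_add_min, add_zero]
  have hxv : ⟪x, v⟫ ≤ 0 := by
    simp only [v, inner_sum, real_inner_smul_right]
    exact sum_nonpos fun k _ ↦ mul_nonpos_of_nonpos_of_nonneg (min_le_right _ _) (hdual k)
  have hwv : 0 ≤ ⟪w, v⟫ :=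
    inner_sum_smul_sum_smul_nonneg hobtuse (fun _ ↦ le_max_right _ _) (fun _ ↦ min_le_right _ _)
      fun k ↦ by rcases le_total (c k) 0 with h | h <;> simp [h]
  have hv : v = 0 := by
    have hvv : ⟪v, v⟫ = ⟪x, v⟫ - ⟪w, v⟫ := by rw [hxwv, inner_add_left]; ring
    exact real_inner_self_nonpos.mp (by linarith)
  simpa using Fintype.linearIndependent_iff.mp hli _ hv j

lemma inner_eq_zero_of_coeff_ne_zero_of_coeff_eq_zero
    (hobtuse : Pairwise fun i j ↦ ⟪b i, b j⟫ ≤ 0) {c : ι → ℝ} (hc : ∀ j, 0 ≤ c j)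
    {j k : ι} (hdual : 0 ≤ ⟪∑ l, c l • b l, b k⟫) (hj : c j ≠ 0) (hk : c k = 0) :
    ⟪b j, b k⟫ = 0 := by
  have hterms : ∀ l ∈ univ, c l * ⟪b l, b k⟫ ≤ 0 := fun l _ ↦ by
    obtain rfl | hlk := eq_or_ne l k
    · simp [hk]
    · exact mul_nonpos_of_nonneg_of_nonpos (hc l) (hobtuse hlk)
  simp only [sum_inner, real_inner_smul_left] at hdual
  have hsum := (sum_eq_zero_iff_of_nonpos hterms).mp (le_antisymm (sum_nonpos hterms) hdual)
  exact (mul_eq_zero.mp (hsum j (mem_univ j))).resolve_left hj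

lemma coeff_pos_of_forall_inner_nonneg (hli : LinearIndependent ℝ b)
    (hobtuse : Pairwise fun i j ↦ ⟪b i, b j⟫ ≤ 0)
    (hirr : ∀ s : Set ι, (∀ i ∈ s, ∀ j ∉ s, ⟪b i, b j⟫ = 0) → s = ∅ ∨ s = Set.univ)
    {c : ι → ℝ} (hdual : ∀ k, 0 ≤ ⟪∑ j, c j • b j, b k⟫) (hne : ∑ j, c j • b j ≠ 0)
    (j : ι) : 0 < c j := by
  have hc := coeff_nonneg_of_forall_inner_nonneg hli hobtuse hdual
  have hsupp : {l | c l ≠ 0} = Set.univ := by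
    refine (hirr _ fun l hl k hk ↦
      inner_eq_zero_of_coeff_ne_zero_of_coeff_eq_zero hobtuse hc (hdual k) hl
        (not_not.mp hk)).resolve_left fun hempty ↦ hne ?_
    refine sum_eq_zero fun l _ ↦ ?_
    have hl : c l = 0 := not_not.mp fun h ↦ (hempty.subset h : l ∈ (∅ : Set ι))
    simp [hl]
  exact (hc j).lt_of_ne' (Set.eq_univ_iff_forall.mp hsupp j)

end ObtuseFamily

theorem quasi_fundamental_weights_pos_coeffs_general
    {V : Type*} [NormedAddCommGroup V] [InnerProductSpace ℝ V]
    {ι : Type*} [Fintype ι] [DecidableEq ι]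
    (b : ι → V) (hli : LinearIndependent ℝ b)
    (hobtuse : ∀ i j, i ≠ j → ⟪b i, b j⟫ ≤ 0)
    (hirr : ∀ s : Set ι, (∀ i ∈ s, ∀ j ∉ s, ⟪b i, b j⟫ = 0) → s = ∅ ∨ s = Set.univ)
    (d : ι → ℝ) (hd : ∀ i, 0 < d i)
    (χ : ι → V)
    (hχ : ∀ i j, ⟪χ i, b j⟫ = if i = j then d i else 0)
    (i : ι) (c : ι → ℝ) (hc : χ i = ∑ j, c j • b j) :
    ∀ j, 0 < c j := by
  have hdual : ∀ k, 0 ≤ ⟪∑ j, c j • b j, b k⟫ := fun k ↦ by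
    rw [← hc, hχ]
    split_ifs
    exacts [(hd i).le, le_rfl]
  have hne : ∑ j, c j • b j ≠ 0 := fun h ↦ by
    have := hχ i i
    rw [hc, h, inner_zero_left, if_pos rfl] at this
    exact (hd i).ne this
  exact coeff_pos_of_forall_inner_nonneg hli hobtuse hirr hdual hne

/-- In a root system with simple system `Δ` (here: a linearly
independent family `b : ι → V` of simple roots with pairwise non-positive inner
products, spanning an irreducible system, i.e. admitting no nontrivial partition into
mutually orthogonal parts), any set of quasi-fundamental weights `χ i`
(i.e. `⟪χ i, b j⟫ = d i · δ_{ij}` with `d i > 0`, and `χ i` in the span of the simple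
roots) has the property that each `χ i`, written as a linear combination of the simple
roots, has all coefficients strictly positive. -/
theorem quasi_fundamental_weights_pos_coeffs
    {V : Type*} [NormedAddCommGroup V] [InnerProductSpace ℝ V]
    {ι : Type*} [Fintype ι] [DecidableEq ι]
    (b : ι → V) (hli : LinearIndependent ℝ b)
    (hobtuse : ∀ i j, i ≠ j → ⟪b i, b j⟫ ≤ 0)
    (hirr : ∀ s : Set ι, (∀ i ∈ s, ∀ j ∉ s, ⟪b i, b j⟫ = 0) → s = ∅ ∨ s = Set.univ)
    (d : ι → ℝ) (hd : ∀ i, 0 < d i)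
    (χ : ι → V)
    (hχ : ∀ i j, ⟪χ i, b j⟫ = if i = j then d i else 0)
    (hspan : ∀ i, χ i ∈ Submodule.span ℝ (Set.range b))
    (i : ι) (c : ι → ℝ) (hc : χ i = ∑ j, c j • b j) :
    ∀ j, 0 < c j :=
  quasi_fundamental_weights_pos_coeffs_general b hli hobtuse hirr d hd χ hχ i c hc
end

section
/- Let Δ be a set of simple roots of a root system with Weyl-invariant inner product, let I ⊆ Δ, and let β ∈ Δ \ I. Then the orthogonal projection π₁(β) of β onto span(I), written as a linear combination of the projections π₁(α) = α for α ∈ I, has all coefficients non-positive. -/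
open RealInnerProductSpace

/-! Split the projection `u = ∑ c i • b i` of `β` as `v - w` with `v = ∑ (c i)⁺ • b i` and
`w = ∑ (c i)⁻ • b i`. Then `‖v‖² = ⟪u, v⟫ + ⟪w, v⟫`. The first term is `≤ 0` because
`⟪u, b i⟫ = ⟪β, b i⟫ ≤ 0` for every `i`; the second is `≤ 0` because `v` and `w` are non-negative
combinations of pairwise obtuse vectors with disjoint supports. Hence `v = 0`, and linear
independence gives `c⁺ = 0`. -/

lemma negPart_mul_posPart {α : Type*} [Ring α] [LinearOrder α] [IsOrderedAddMonoid α] (a : α) :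
    a⁻ * a⁺ = 0 := by
  rcases le_total a 0 with h | h
  · rw [posPart_eq_zero.2 h, mul_zero]
  · rw [negPart_eq_zero.2 h, zero_mul]

section ObtuseFamily

variable {V ι : Type*} [NormedAddCommGroup V] [InnerProductSpace ℝ V] [Fintype ι] {b : ι → V}

lemma inner_sum_smul_nonpos {u : V} (hu : ∀ i, ⟪u, b i⟫ ≤ 0) {a : ι → ℝ} (ha : 0 ≤ a) :
    ⟪u, ∑ i, a i • b i⟫ ≤ 0 := by
  rw [inner_sum]
  exact Finset.sum_nonpos fun i _ ↦ by
    rw [real_inner_smul_right]; exact mul_nonpos_of_nonneg_of_nonpos (ha i) (hu i)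

lemma inner_sum_negPart_smul_sum_posPart_smul_nonpos (hobtuse : ∀ i j, i ≠ j → ⟪b i, b j⟫ ≤ 0)
    (c : ι → ℝ) : ⟪∑ i, (c i)⁻ • b i, ∑ j, (c j)⁺ • b j⟫ ≤ 0 := by
  simp_rw [sum_inner, inner_sum, real_inner_smul_left, real_inner_smul_right]
  refine Finset.sum_nonpos fun i _ ↦ Finset.sum_nonpos fun j _ ↦ ?_
  rcases eq_or_ne i j with rfl | hij
  · rw [← mul_assoc, negPart_mul_posPart, zero_mul]
  · exact mul_nonpos_of_nonneg_of_nonpos (negPart_nonneg _)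
      (mul_nonpos_of_nonneg_of_nonpos (posPart_nonneg _) (hobtuse i j hij))

lemma sum_posPart_smul_eq_zero_of_inner_nonpos (hobtuse : ∀ i j, i ≠ j → ⟪b i, b j⟫ ≤ 0)
    {c : ι → ℝ} (hc : ∀ i, ⟪∑ j, c j • b j, b i⟫ ≤ 0) : ∑ i, (c i)⁺ • b i = 0 := by
  set v := ∑ i, (c i)⁺ • b i
  set w := ∑ i, (c i)⁻ • b i
  have hu : ∑ i, c i • b i = v - w := by
    simp_rw [v, w, ← Finset.sum_sub_distrib, ← sub_smul, posPart_sub_negPart]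
  have hvv : ⟪v, v⟫ ≤ 0 := calc
    ⟪v, v⟫ = ⟪∑ i, c i • b i, v⟫ + ⟪w, v⟫ := by rw [hu, ← inner_add_left, sub_add_cancel]
    _ ≤ 0 := add_nonpos (inner_sum_smul_nonpos hc fun i ↦ posPart_nonneg (c i))
      (inner_sum_negPart_smul_sum_posPart_smul_nonpos hobtuse c)
  exact inner_self_eq_zero.mp (le_antisymm hvv real_inner_self_nonneg)

lemma LinearIndependent.nonpos_of_inner_sum_smul_nonpos (hli : LinearIndependent ℝ b)
    (hobtuse : ∀ i j, i ≠ j → ⟪b i, b j⟫ ≤ 0) {c : ι → ℝ}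
    (hc : ∀ i, ⟪∑ j, c j • b j, b i⟫ ≤ 0) (i : ι) : c i ≤ 0 :=
  posPart_eq_zero.mp <| Fintype.linearIndependent_iff.mp hli (fun i ↦ (c i)⁺)
    (sum_posPart_smul_eq_zero_of_inner_nonpos hobtuse hc) i

end ObtuseFamily

/-- Let `Δ` be a set of simple roots of a root system with
Weyl-invariant inner product, `I ⊆ Δ` (here `I` is modelled by the linearly
independent family `b : ι → V` of simple roots in `I`, with pairwise non-positive
inner products) and `β ∈ Δ \ I`, so that `⟪β, b i⟫ ≤ 0` for all `i`.  Then the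
orthogonal projection `π₁ β` of `β` onto the span of `I`, written as a linear
combination of the simple roots `b i`, has all coefficients non-positive. -/
theorem projection_of_root_nonpos_coeffs
    {V : Type*} [NormedAddCommGroup V] [InnerProductSpace ℝ V] [FiniteDimensional ℝ V]
    {ι : Type*} [Fintype ι]
    (b : ι → V) (hli : LinearIndependent ℝ b)
    (hobtuse : ∀ i j, i ≠ j → ⟪b i, b j⟫ ≤ 0)
    (β : V) (hβ : ∀ i, ⟪β, b i⟫ ≤ 0)
    (c : ι → ℝ)
    (hc : ((Submodule.orthogonalProjectionOnto (Submodule.span ℝ (Set.range b)) β) : V)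
        = ∑ i, c i • b i) :
    ∀ i, c i ≤ 0 := by
  refine hli.nonpos_of_inner_sum_smul_nonpos hobtuse fun i ↦ ?_
  have hbi : b i ∈ Submodule.span ℝ (Set.range b) := Submodule.subset_span ⟨i, rfl⟩
  rw [← hc]
  exact (Submodule.inner_orthogonalProjectionOnto_eq_of_mem_right ⟨b i, hbi⟩ β).trans_le (hβ i)
end
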